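/- arXiv:2403.04046 — 4 statements merged into one kernel-verified Lean document; each statement's English description precedes it below -/
import Mathlib

section
/- Let X be a nonempty set and let c₀(X, ℚ_p) = {ξ : X → ℚ_p : for every ε > 0 the set {x : |ξ(x)|_p ≥ ε} is finite}. Then c₀(X, ℚ_p) is the largest ℚ_p-vector subspace of ℚ_p(X): if K is a ℚ_p-subspace with c₀(X,ℚ_p) ⊆ K ⊆ ℚ_p(X), then K = c₀(X, ℚ_p). -/
/-! A subspace cannot leave `c₀`: if `|ξ x| ≥ ε` on an infinite set, then scaling by `c` with
`|c| > 1/ε` produces a vector with infinitely many coordinates of norm `> 1`. -/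

theorem finite_setOf_le_norm_of_forall_finite_one_lt_norm_mul {𝕜 X : Type*}
    [NontriviallyNormedField 𝕜] {ξ : X → 𝕜} (h : ∀ c : 𝕜, {x | 1 < ‖c * ξ x‖}.Finite)
    {ε : ℝ} (hε : 0 < ε) : {x | ε ≤ ‖ξ x‖}.Finite := by
  obtain ⟨c, hc⟩ := NormedField.exists_lt_norm 𝕜 ε⁻¹
  refine (h c).subset fun x (hx : ε ≤ ‖ξ x‖) => ?_
  calc (1 : ℝ) = ε⁻¹ * ε := (inv_mul_cancel₀ hε.ne').symm
    _ < ‖c‖ * ‖ξ x‖ := mul_lt_mul hc hx hε (norm_nonneg c)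
    _ = ‖c * ξ x‖ := (norm_mul c (ξ x)).symm

theorem stmt5_general (p : ℕ) [Fact p.Prime] (X : Type*)
    (K : Set (X → ℚ_[p]))
    (hKsub : ∀ ξ ∈ K, {x : X | 1 < ‖ξ x‖}.Finite)
    (hc0K : {ξ : X → ℚ_[p] | ∀ ε : ℝ, 0 < ε → {x : X | ε ≤ ‖ξ x‖}.Finite} ⊆ K)
    (hsmul : ∀ (c : ℚ_[p]), ∀ ξ ∈ K, (fun x => c * ξ x) ∈ K) :
    K = {ξ : X → ℚ_[p] | ∀ ε : ℝ, 0 < ε → {x : X | ε ≤ ‖ξ x‖}.Finite} :=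
  Set.Subset.antisymm
    (fun ξ hξ _ hε =>
      finite_setOf_le_norm_of_forall_finite_one_lt_norm_mul (fun c => hKsub _ (hsmul c ξ hξ)) hε)
    hc0K

/-- `c₀(X, ℚ_p)` is the largest `ℚ_p`-vector subspace of `ℚ_p(X)`: any `ℚ_p`-subspace `K`
with `c₀(X, ℚ_p) ⊆ K ⊆ ℚ_p(X)` equals `c₀(X, ℚ_p)`. -/
theorem stmt5 (p : ℕ) [Fact p.Prime] (X : Type*) [Nonempty X]
    (K : Set (X → ℚ_[p]))
    (hKsub : ∀ ξ ∈ K, {x : X | 1 < ‖ξ x‖}.Finite)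
    (hc0K : {ξ : X → ℚ_[p] | ∀ ε : ℝ, 0 < ε → {x : X | ε ≤ ‖ξ x‖}.Finite} ⊆ K)
    (hadd : ∀ ξ ∈ K, ∀ η ∈ K, ξ + η ∈ K)
    (hsmul : ∀ (c : ℚ_[p]), ∀ ξ ∈ K, (fun x => c * ξ x) ∈ K) :
    K = {ξ : X → ℚ_[p] | ∀ ε : ℝ, 0 < ε → {x : X | ε ≤ ‖ξ x‖}.Finite} :=
  stmt5_general p X K hKsub hc0K hsmul
end

section
/- Let X be a nonempty set and T : ℚ_p(X) → ℚ_p(X) a ℤ_p-linear map. Then for every y ∈ X, the function x ↦ T(δ_y)(x) tends to 0 at infinity: for every ε > 0 there is a finite subset F ⊆ X such that |T(δ_y)(x)|_p < ε for all x ∉ F. -/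
open scoped Classical

theorem finite_setOf_le_norm_of_eq_mul {𝕜 X : Type*} [SeminormedRing 𝕜] {f g : X → 𝕜} {c : 𝕜}
    {ε : ℝ} (hfg : ∀ x, f x = c * g x) (hg : {x | 1 < ‖g x‖}.Finite) (hc : ‖c‖ < ε) :
    {x | ε ≤ ‖f x‖}.Finite :=
  hg.subset fun x hx => by
    by_contra hgx
    replace hgx : ‖g x‖ ≤ 1 := not_lt.mp hgx
    have : ‖f x‖ ≤ ‖c‖ :=
      calc ‖f x‖ ≤ ‖c‖ * ‖g x‖ := hfg x ▸ norm_mul_le c (g x)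
        _ ≤ ‖c‖ := mul_le_of_le_one_right (norm_nonneg c) hgx
    exact (hx.out.trans this).not_gt hc

namespace Padic

variable {p : ℕ} [Fact p.Prime]

theorem exists_norm_pow_lt {ε : ℝ} (hε : 0 < ε) :
    ∃ n : ℕ, ‖(((p : ℤ_[p]) ^ n : ℤ_[p]) : ℚ_[p])‖ < ε := by
  have hp : (p : ℝ)⁻¹ < 1 := inv_lt_one_of_one_lt₀ (by exact_mod_cast (Fact.out : p.Prime).one_lt)
  obtain ⟨n, hn⟩ := exists_pow_lt_of_lt_one hε hp
  exact ⟨n, by simpa [norm_pow, Padic.norm_p] using hn⟩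

/-- `T ξ = pⁿ • T (p⁻ⁿ • ξ)`, and `T (p⁻ⁿ • ξ)` is bounded by `1` off a finite set. -/
theorem finite_setOf_le_norm_apply {X : Type*} (T : (X → ℚ_[p]) → X → ℚ_[p])
    (hmem : ∀ ξ : X → ℚ_[p], {x : X | 1 < ‖ξ x‖}.Finite → {x : X | 1 < ‖T ξ x‖}.Finite)
    (hsmul : ∀ (c : ℤ_[p]) (ξ : X → ℚ_[p]), {x : X | 1 < ‖ξ x‖}.Finite →
      T (fun x => (c : ℚ_[p]) * ξ x) = fun x => (c : ℚ_[p]) * T ξ x)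
    {ξ : X → ℚ_[p]} (hξ : (Function.support ξ).Finite) {ε : ℝ} (hε : 0 < ε) :
    {x | ε ≤ ‖T ξ x‖}.Finite := by
  obtain ⟨n, hn⟩ := exists_norm_pow_lt (p := p) hε
  set c : ℤ_[p] := (p : ℤ_[p]) ^ n
  have hc : (c : ℚ_[p]) ≠ 0 := by
    simp [c, (Fact.out : p.Prime).ne_zero]
  set η : X → ℚ_[p] := fun x => (c : ℚ_[p])⁻¹ * ξ x
  have hη : {x | 1 < ‖η x‖}.Finite := hξ.subset fun x hx h0 => by simp [η, h0] at hx; linarith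
  have hTξ : T ξ = fun x => (c : ℚ_[p]) * T η x := by
    rw [← hsmul c η hη]
    simp only [η, mul_inv_cancel_left₀ hc]
  exact finite_setOf_le_norm_of_eq_mul (congrFun hTξ) (hmem η hη) hn

end Padic

theorem stmt11_general (p : ℕ) [Fact p.Prime] (X : Type*)
    (T : (X → ℚ_[p]) → X → ℚ_[p])
    (hmem : ∀ ξ : X → ℚ_[p], {x : X | 1 < ‖ξ x‖}.Finite →
      {x : X | 1 < ‖T ξ x‖}.Finite)
    (hsmul : ∀ (c : ℤ_[p]) (ξ : X → ℚ_[p]), {x : X | 1 < ‖ξ x‖}.Finite →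
      T (fun x => (c : ℚ_[p]) * ξ x) = fun x => (c : ℚ_[p]) * T ξ x) :
    ∀ y : X, ∀ ε : ℝ, 0 < ε → ∃ F : Finset X, ∀ x : X, x ∉ F →
      ‖T (fun x => if x = y then (1 : ℚ_[p]) else 0) x‖ < ε := by
  intro y ε hε
  have hδ : (Function.support fun x : X => if x = y then (1 : ℚ_[p]) else 0).Finite :=
    (Set.finite_singleton y).subset fun x hx => by simpa using hx
  have hfin := Padic.finite_setOf_le_norm_apply T hmem hsmul hδ hε
  exact ⟨hfin.toFinset, fun x hx => not_le.mp fun h => hx (hfin.mem_toFinset.mpr h)⟩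

/-- For a `ℤ_p`-linear map `T : ℚ_p(X) → ℚ_p(X)` and any `y ∈ X`, the function
`x ↦ T(δ_y)(x)` tends to `0` at infinity. -/
theorem stmt11 (p : ℕ) [Fact p.Prime] (X : Type*) [Nonempty X]
    (T : (X → ℚ_[p]) → X → ℚ_[p])
    (hmem : ∀ ξ : X → ℚ_[p], {x : X | 1 < ‖ξ x‖}.Finite →
      {x : X | 1 < ‖T ξ x‖}.Finite)
    (hadd : ∀ ξ η : X → ℚ_[p], {x : X | 1 < ‖ξ x‖}.Finite →
      {x : X | 1 < ‖η x‖}.Finite → T (ξ + η) = T ξ + T η)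
    (hsmul : ∀ (c : ℤ_[p]) (ξ : X → ℚ_[p]), {x : X | 1 < ‖ξ x‖}.Finite →
      T (fun x => (c : ℚ_[p]) * ξ x) = fun x => (c : ℚ_[p]) * T ξ x) :
    ∀ y : X, ∀ ε : ℝ, 0 < ε → ∃ F : Finset X, ∀ x : X, x ∉ F →
      ‖T (fun x => if x = y then (1 : ℚ_[p]) else 0) x‖ < ε :=
  stmt11_general p X T hmem hsmul
end

section
/- Let T : ℚ_p(X) → ℚ_p(X) be a ℤ_p-linear adjointable operator with ‖T‖ ≤ 1 (operator norm with respect to the sup-norm). Then ‖T‖ = max_{x,y ∈ X} |T_{x,y}|_p, where T_{x,y} = T(δ_y)(x); consequently ‖T*‖ = ‖T‖, i.e. the involution is isometric. -/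
open scoped Classical

/-!
Pair `ξ` with a scaled basis vector `d⁻¹ δ_x`, `d ∈ ℤ_p`, and move `T` across the pairing: modulo
`ℤ_p`, `(Tξ)(x) d⁻¹ ≡ ∑_z ξ(z) d⁻¹ T*(δ_x)(z)`. With `ξ = δ_y` and `d = pⁿ` this forces
`T*(δ_x)(y) = T(δ_y)(x)`, so the matrix of `T*` is the transpose of that of `T`. If `‖ξ‖ ≤ 1` and
every entry of row `x` has norm at most `|d|`, the right-hand side vanishes, so `|(Tξ)(x)| ≤ |d|`.
Since the norm of `ℚ_p` is discrete, `d` can be taken with `|d| < |(Tξ)(x)|` as soon as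
`|(Tξ)(x)|` exceeds all entries of its row; hence `‖T‖` is at most the largest entry, and testing
`T` on the `δ_y` gives the reverse inequality. The same argument applies to `T*`.
-/

theorem le_iSup_iSup_of_le {ι κ : Type*} {f : ι → κ → ℝ} {C : ℝ} (hC : ∀ i j, f i j ≤ C)
    (i : ι) (j : κ) : f i j ≤ ⨆ i, ⨆ j, f i j := by
  have : Nonempty κ := ⟨j⟩
  exact (le_ciSup ⟨C, by rintro _ ⟨j, rfl⟩; exact hC i j⟩ j).trans
    (le_ciSup ⟨C, by rintro _ ⟨i, rfl⟩; exact ciSup_le (hC i)⟩ i)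

namespace Padic

variable {p : ℕ} [Fact p.Prime]

theorem norm_le_norm_mul_p_of_norm_lt {e c : ℚ_[p]} (h : ‖e‖ < ‖c‖) : ‖e‖ ≤ ‖c * p‖ := by
  have hc : 0 < ‖c‖ := (norm_nonneg e).trans_lt h
  have hdiv : ‖e / c‖ ≤ (p : ℝ) ^ (-1 : ℤ) := by
    rw [norm_le_pow_iff_norm_lt_pow_add_one, norm_div, div_lt_iff₀ hc]
    simpa using h
  rwa [norm_div, div_le_iff₀ hc, zpow_neg_one, ← norm_p, mul_comm, ← norm_mul] at hdiv

theorem eq_of_forall_norm_sub_le {a b : ℚ_[p]} (h : ∀ n : ℕ, ‖a - b‖ ≤ ‖(p : ℚ_[p]) ^ n‖) :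
    a = b := by
  have hp : (p : ℝ)⁻¹ < 1 := inv_lt_one_of_one_lt₀ (by exact_mod_cast (Fact.out : p.Prime).one_lt)
  have hlim := tendsto_pow_atTop_nhds_zero_of_lt_one (by positivity) hp
  have : ‖a - b‖ ≤ 0 := ge_of_tendsto' hlim fun n => by simpa [norm_pow, norm_p] using h n
  exact sub_eq_zero.mp (norm_le_zero_iff.mp this)

theorem mk_eq_zero_iff_norm_le_one (a : ℚ_[p]) :
    (QuotientAddGroup.mk a : ℚ_[p] ⧸ (PadicInt.subring p).toAddSubgroup) = 0 ↔ ‖a‖ ≤ 1 :=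
  QuotientAddGroup.eq_zero_iff a

end Padic

noncomputable section

namespace PadicFun

variable {p : ℕ} [Fact p.Prime] {X : Type*}

/-- Membership in `ℚ_p(X)`: all but finitely many values lie in `ℤ_p`. -/
def AlmostIntegral (ξ : X → ℚ_[p]) : Prop := {x : X | 1 < ‖ξ x‖}.Finite

def supNorm (ξ : X → ℚ_[p]) : ℝ := ⨆ x, ‖ξ x‖

def pairing (ξ η : X → ℚ_[p]) : ℚ_[p] ⧸ (PadicInt.subring p).toAddSubgroup :=
  ∑ᶠ x : X, (QuotientAddGroup.mk (ξ x * η x) : ℚ_[p] ⧸ (PadicInt.subring p).toAddSubgroup)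

def opNorm (A : (X → ℚ_[p]) → X → ℚ_[p]) : ℝ :=
  sSup {r : ℝ | ∃ ξ : X → ℚ_[p], AlmostIntegral ξ ∧ supNorm ξ ≤ 1 ∧ r = supNorm (A ξ)}

def IsAdjoint (A B : (X → ℚ_[p]) → X → ℚ_[p]) : Prop :=
  ∀ ξ η : X → ℚ_[p], AlmostIntegral ξ → AlmostIntegral η → pairing (A ξ) η = pairing ξ (B η)

def IsZpHomogeneous (U : (X → ℚ_[p]) → X → ℚ_[p]) : Prop :=
  ∀ (c : ℤ_[p]) (ξ : X → ℚ_[p]), AlmostIntegral ξ →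
    U (fun x => (c : ℚ_[p]) * ξ x) = fun x => (c : ℚ_[p]) * U ξ x

theorem AlmostIntegral.single (y : X) (c : ℚ_[p]) : AlmostIntegral (Pi.single y c) :=
  (Set.finite_singleton y).subset fun z hz => by
    by_contra hzy
    norm_num [Pi.single_apply, Set.mem_singleton_iff.not.mp hzy] at hz

theorem AlmostIntegral.bddAbove_range_norm {ξ : X → ℚ_[p]} (hξ : AlmostIntegral ξ) :
    BddAbove (Set.range fun x => ‖ξ x‖) := by
  refine ((hξ.image fun x => ‖ξ x‖).bddAbove.union (bddAbove_Iic (a := 1))).mono ?_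
  rintro _ ⟨x, rfl⟩
  by_cases h : 1 < ‖ξ x‖
  · exact Or.inl ⟨x, h, rfl⟩
  · exact Or.inr (not_lt.mp h)

theorem AlmostIntegral.norm_le_supNorm {ξ : X → ℚ_[p]} (hξ : AlmostIntegral ξ) (x : X) :
    ‖ξ x‖ ≤ supNorm ξ :=
  le_ciSup hξ.bddAbove_range_norm x

theorem supNorm_nonneg (ξ : X → ℚ_[p]) : 0 ≤ supNorm ξ :=
  Real.iSup_nonneg fun _ => norm_nonneg _

theorem supNorm_le {ξ : X → ℚ_[p]} {r : ℝ} (h : ∀ x, ‖ξ x‖ ≤ r) (hr : 0 ≤ r) : supNorm ξ ≤ r :=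
  Real.iSup_le h hr

theorem supNorm_single_one_le (y : X) : supNorm (Pi.single y (1 : ℚ_[p])) ≤ 1 :=
  supNorm_le (fun x => by rw [Pi.single_apply]; split_ifs <;> simp) zero_le_one

theorem pairing_comm (ξ η : X → ℚ_[p]) : pairing ξ η = pairing η ξ :=
  finsum_congr fun x => by rw [mul_comm]

theorem pairing_single_right (ζ : X → ℚ_[p]) (x : X) (c : ℚ_[p]) :
    pairing ζ (Pi.single x c) = QuotientAddGroup.mk (ζ x * c) := by
  rw [pairing, finsum_eq_single _ x fun z hz => by simp [hz]]
  simp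

theorem pairing_single_left (x : X) (c : ℚ_[p]) (ζ : X → ℚ_[p]) :
    pairing (Pi.single x c) ζ = QuotientAddGroup.mk (c * ζ x) := by
  rw [pairing_comm, pairing_single_right, mul_comm]

theorem pairing_eq_zero {ξ η : X → ℚ_[p]} (h : ∀ x, ‖ξ x * η x‖ ≤ 1) : pairing ξ η = 0 :=
  finsum_eq_zero_of_forall_eq_zero fun x => (Padic.mk_eq_zero_iff_norm_le_one _).mpr (h x)

theorem IsAdjoint.symm {A B : (X → ℚ_[p]) → X → ℚ_[p]} (h : IsAdjoint A B) : IsAdjoint B A :=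
  fun ξ η hξ hη => by rw [pairing_comm, ← h η ξ hη hξ, pairing_comm]

theorem IsZpHomogeneous.apply_single_inv {U : (X → ℚ_[p]) → X → ℚ_[p]} (hU : IsZpHomogeneous U)
    {d : ℤ_[p]} (hd : d ≠ 0) (y x : X) :
    U (Pi.single y (d : ℚ_[p])⁻¹) x = (d : ℚ_[p])⁻¹ * U (Pi.single y 1) x := by
  have hd' : (d : ℚ_[p]) ≠ 0 := PadicInt.coe_eq_zero.not.mpr hd
  have hscale :
      (fun z => (d : ℚ_[p]) * (Pi.single y (d : ℚ_[p])⁻¹ : X → ℚ_[p]) z) = Pi.single y 1 := by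
    funext z
    rw [Pi.single_apply, Pi.single_apply]
    split_ifs
    · field_simp
    · exact mul_zero _
  have h := congrFun (hU d (Pi.single y (d : ℚ_[p])⁻¹) (.single y _)) x
  rw [hscale] at h
  rw [h, inv_mul_cancel_left₀ hd']

variable {A B : (X → ℚ_[p]) → X → ℚ_[p]}

theorem IsAdjoint.apply_single (hadj : IsAdjoint A B) (hA : IsZpHomogeneous A) (x y : X) :
    B (Pi.single x 1) y = A (Pi.single y 1) x := by
  have hclose : ∀ d : ℤ_[p], d ≠ 0 →
      ‖A (Pi.single y 1) x - B (Pi.single x 1) y‖ ≤ ‖(d : ℚ_[p])‖ := by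
    intro d hd
    have hd' : (0 : ℝ) < ‖(d : ℚ_[p])‖ := norm_pos_iff.mpr (PadicInt.coe_eq_zero.not.mpr hd)
    have key := hadj _ _ (.single y (d : ℚ_[p])⁻¹) (.single x 1)
    rw [pairing_single_right, pairing_single_left, hA.apply_single_inv hd, mul_one,
      ← sub_eq_zero, ← QuotientAddGroup.mk_sub, ← mul_sub, Padic.mk_eq_zero_iff_norm_le_one,
      norm_mul, norm_inv, inv_mul_le_iff₀ hd', mul_one] at key
    exact key
  refine (Padic.eq_of_forall_norm_sub_le fun n => ?_).symm
  have hpn : (p : ℤ_[p]) ^ n ≠ 0 := pow_ne_zero _ (by exact_mod_cast (Fact.out : p.Prime).ne_zero)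
  simpa using hclose _ hpn

theorem norm_apply_le_of_row_le_norm (hadj : IsAdjoint A B) (hA : IsZpHomogeneous A)
    (hB : IsZpHomogeneous B) {ξ : X → ℚ_[p]} (hξ : AlmostIntegral ξ) (hξ1 : supNorm ξ ≤ 1)
    {x : X} {d : ℤ_[p]} (hd : d ≠ 0) (hrow : ∀ z, ‖A (Pi.single z 1) x‖ ≤ ‖(d : ℚ_[p])‖) :
    ‖A ξ x‖ ≤ ‖(d : ℚ_[p])‖ := by
  have hd' : (0 : ℝ) < ‖(d : ℚ_[p])‖ := norm_pos_iff.mpr (PadicInt.coe_eq_zero.not.mpr hd)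
  have hvanish : pairing ξ (B (Pi.single x (d : ℚ_[p])⁻¹)) = 0 := by
    refine pairing_eq_zero fun z => ?_
    rw [hB.apply_single_inv hd, hadj.apply_single hA, norm_mul, norm_mul, norm_inv]
    have hentry : ‖(d : ℚ_[p])‖⁻¹ * ‖A (Pi.single z 1) x‖ ≤ 1 :=
      (inv_mul_le_iff₀ hd').mpr ((hrow z).trans_eq (mul_one _).symm)
    exact mul_le_one₀ ((hξ.norm_le_supNorm z).trans hξ1) (by positivity) hentry
  have key := hadj ξ (Pi.single x (d : ℚ_[p])⁻¹) hξ (.single x _)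
  rw [hvanish, pairing_single_right, Padic.mk_eq_zero_iff_norm_le_one, norm_mul, norm_inv,
    mul_inv_le_iff₀ hd', one_mul] at key
  exact key

theorem norm_apply_le_of_row_le (hadj : IsAdjoint A B) (hA : IsZpHomogeneous A)
    (hB : IsZpHomogeneous B) {ξ : X → ℚ_[p]} (hξ : AlmostIntegral ξ) (hξ1 : supNorm ξ ≤ 1) {x : X} {M : ℝ} (hM1 : M ≤ 1)
    (hrow : ∀ z, ‖A (Pi.single z 1) x‖ ≤ M) : ‖A ξ x‖ ≤ M := by
  by_contra! hlt
  by_cases hbig : 1 < ‖A ξ x‖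
  · have hle := norm_apply_le_of_row_le_norm hadj hA hB hξ hξ1 one_ne_zero
      fun z => by simpa using (hrow z).trans hM1
    simp only [PadicInt.coe_one, norm_one] at hle
    exact hbig.not_ge hle
  · -- `|d| = |(Aξ)(x)| / p` lies below `|(Aξ)(x)|` but above every smaller norm
    set d : ℤ_[p] := ⟨A ξ x * p, by
      rw [norm_mul, Padic.norm_p]
      exact mul_le_one₀ (not_lt.mp hbig) (by positivity)
        (inv_le_one_of_one_le₀ (by exact_mod_cast (Fact.out : p.Prime).one_le))⟩
    have hpos : 0 < ‖A ξ x‖ := ((norm_nonneg _).trans (hrow x)).trans_lt hlt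
    have hd : d ≠ 0 := PadicInt.coe_eq_zero.not.mp <|
      mul_ne_zero (norm_pos_iff.mp hpos) (Nat.cast_ne_zero.mpr (Fact.out : p.Prime).ne_zero)
    have hle := norm_apply_le_of_row_le_norm hadj hA hB hξ hξ1 hd
      fun z => Padic.norm_le_norm_mul_p_of_norm_lt ((hrow z).trans_lt hlt)
    have hp : (p : ℝ)⁻¹ < 1 := inv_lt_one_of_one_lt₀ (by exact_mod_cast (Fact.out : p.Prime).one_lt)
    simp only [d, norm_mul, Padic.norm_p] at hle
    exact (mul_lt_of_lt_one_right hpos hp).not_ge hle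

theorem opNorm_nonneg (A : (X → ℚ_[p]) → X → ℚ_[p]) : 0 ≤ opNorm A :=
  Real.sSup_nonneg (by rintro _ ⟨ξ, -, -, rfl⟩; exact supNorm_nonneg _)

theorem opNorm_le {M : ℝ} (hM : 0 ≤ M)
    (h : ∀ ξ, AlmostIntegral ξ → supNorm ξ ≤ 1 → supNorm (A ξ) ≤ M) : opNorm A ≤ M :=
  Real.sSup_le (by rintro _ ⟨ξ, hξ, hξ1, rfl⟩; exact h ξ hξ hξ1) hM

theorem norm_apply_single_le_opNorm {M : ℝ}
    (h : ∀ ξ, AlmostIntegral ξ → supNorm ξ ≤ 1 → supNorm (A ξ) ≤ M) {y : X}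
    (hy : AlmostIntegral (A (Pi.single y 1))) (x : X) : ‖A (Pi.single y 1) x‖ ≤ opNorm A :=
  (hy.norm_le_supNorm x).trans <|
    le_csSup ⟨M, by rintro _ ⟨ξ, hξ, hξ1, rfl⟩; exact h ξ hξ hξ1⟩
      ⟨_, .single y 1, supNorm_single_one_le y, rfl⟩

end PadicFun

end

open PadicFun in
theorem stmt16_general (p : ℕ) [Fact p.Prime] (X : Type*)
    (T Ts : (X → ℚ_[p]) → X → ℚ_[p]) :
    let Z : AddSubgroup ℚ_[p] := (PadicInt.subring p).toAddSubgroup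
    let Mem : (X → ℚ_[p]) → Prop := fun ξ => {x : X | 1 < ‖ξ x‖}.Finite
    let Nrm : (X → ℚ_[p]) → ℝ := fun ξ => ⨆ x, ‖ξ x‖
    let pair : (X → ℚ_[p]) → (X → ℚ_[p]) → ℚ_[p] ⧸ Z :=
      fun ξ η => ∑ᶠ x : X, (QuotientAddGroup.mk (ξ x * η x) : ℚ_[p] ⧸ Z)
    let δ : X → X → ℚ_[p] := fun y x => if x = y then 1 else 0
    let opNorm : ((X → ℚ_[p]) → X → ℚ_[p]) → ℝ := fun A =>
      sSup {r : ℝ | ∃ ξ : X → ℚ_[p], Mem ξ ∧ Nrm ξ ≤ 1 ∧ r = Nrm (A ξ)}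
    (∀ ξ : X → ℚ_[p], Mem ξ → Mem (T ξ)) →
    (∀ η : X → ℚ_[p], Mem η → Mem (Ts η)) →
    (∀ ξ η : X → ℚ_[p], Mem ξ → Mem η → T (ξ + η) = T ξ + T η) →
    (∀ (c : ℤ_[p]) (ξ : X → ℚ_[p]), Mem ξ →
        T (fun x => (c : ℚ_[p]) * ξ x) = fun x => (c : ℚ_[p]) * T ξ x) →
    (∀ ξ η : X → ℚ_[p], Mem ξ → Mem η → Ts (ξ + η) = Ts ξ + Ts η) →
    (∀ (c : ℤ_[p]) (ξ : X → ℚ_[p]), Mem ξ →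
        Ts (fun x => (c : ℚ_[p]) * ξ x) = fun x => (c : ℚ_[p]) * Ts ξ x) →
    (∀ ξ η : X → ℚ_[p], Mem ξ → Mem η → pair (T ξ) η = pair ξ (Ts η)) →
    (∀ ξ : X → ℚ_[p], Mem ξ → Nrm ξ ≤ 1 → Nrm (T ξ) ≤ 1) →
    opNorm T = (⨆ x, ⨆ y, ‖T (δ y) x‖) ∧ opNorm Ts = opNorm T := by
  intro Z Mem Nrm pair δ opNorm
    (hTmem : ∀ ξ, AlmostIntegral ξ → AlmostIntegral (T ξ))
    (hTsmem : ∀ ξ, AlmostIntegral ξ → AlmostIntegral (Ts ξ)) _ (hT : IsZpHomogeneous T) _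
    (hTs : IsZpHomogeneous Ts) (hadj : IsAdjoint T Ts)
    (hcontr : ∀ ξ, AlmostIntegral ξ → supNorm ξ ≤ 1 → supNorm (T ξ) ≤ 1)
  have hδ : δ = fun y => Pi.single y 1 := by funext y x; simp [δ, Pi.single_apply]
  rw [hδ]
  set M := ⨆ x, ⨆ y, ‖T (Pi.single y 1) x‖
  have hentry1 : ∀ x y, ‖T (Pi.single y 1) x‖ ≤ 1 := fun x y =>
    ((hTmem _ (.single y 1)).norm_le_supNorm x).trans
      (hcontr _ (.single y 1) (supNorm_single_one_le y))
  have hentryM : ∀ x y, ‖T (Pi.single y 1) x‖ ≤ M := le_iSup_iSup_of_le hentry1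
  have hM0 : 0 ≤ M := Real.iSup_nonneg fun _ => Real.iSup_nonneg fun _ => norm_nonneg _
  have hM1 : M ≤ 1 := Real.iSup_le (fun x => Real.iSup_le (hentry1 x) zero_le_one) zero_le_one
  have htranspose : ∀ x y, Ts (Pi.single x 1) y = T (Pi.single y 1) x := hadj.apply_single hT
  have hTbound : ∀ ξ, AlmostIntegral ξ → supNorm ξ ≤ 1 → supNorm (T ξ) ≤ M := fun ξ hξ hξ1 =>
    supNorm_le (fun x => norm_apply_le_of_row_le hadj hT hTs hξ hξ1 hM1 (hentryM x)) hM0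
  have hTsbound : ∀ ξ, AlmostIntegral ξ → supNorm ξ ≤ 1 → supNorm (Ts ξ) ≤ M := fun ξ hξ hξ1 =>
    supNorm_le (fun x => norm_apply_le_of_row_le hadj.symm hTs hT hξ hξ1 hM1
      fun z => (htranspose z x).symm ▸ hentryM z x) hM0
  have hopT : PadicFun.opNorm T = M := le_antisymm (opNorm_le hM0 hTbound) <|
    Real.iSup_le (fun x => Real.iSup_le (fun y => norm_apply_single_le_opNorm hTbound
      (hTmem _ (.single y 1)) x) (opNorm_nonneg T)) (opNorm_nonneg T)
  have hopTs : PadicFun.opNorm Ts = M := le_antisymm (opNorm_le hM0 hTsbound) <|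
    Real.iSup_le (fun x => Real.iSup_le (fun y => htranspose x y ▸
      norm_apply_single_le_opNorm hTsbound (hTsmem _ (.single x 1)) y) (opNorm_nonneg Ts))
      (opNorm_nonneg Ts)
  exact ⟨hopT, hopTs.trans hopT.symm⟩

/-- For a `ℤ_p`-linear adjointable contraction `T` on `ℚ_p(X)`, the operator norm equals
the sup of the absolute values of the matrix entries `T_{x,y} = T(δ_y)(x)`; consequently
`‖T*‖ = ‖T‖`, i.e. the involution is isometric. -/
theorem stmt16 (p : ℕ) [Fact p.Prime] (X : Type*) [Nonempty X]
    (T Ts : (X → ℚ_[p]) → X → ℚ_[p]) :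
    let Z : AddSubgroup ℚ_[p] := (PadicInt.subring p).toAddSubgroup
    let Mem : (X → ℚ_[p]) → Prop := fun ξ => {x : X | 1 < ‖ξ x‖}.Finite
    let Nrm : (X → ℚ_[p]) → ℝ := fun ξ => ⨆ x, ‖ξ x‖
    let pair : (X → ℚ_[p]) → (X → ℚ_[p]) → ℚ_[p] ⧸ Z :=
      fun ξ η => ∑ᶠ x : X, (QuotientAddGroup.mk (ξ x * η x) : ℚ_[p] ⧸ Z)
    let δ : X → X → ℚ_[p] := fun y x => if x = y then 1 else 0
    let opNorm : ((X → ℚ_[p]) → X → ℚ_[p]) → ℝ := fun A =>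
      sSup {r : ℝ | ∃ ξ : X → ℚ_[p], Mem ξ ∧ Nrm ξ ≤ 1 ∧ r = Nrm (A ξ)}
    (∀ ξ : X → ℚ_[p], Mem ξ → Mem (T ξ)) →
    (∀ η : X → ℚ_[p], Mem η → Mem (Ts η)) →
    (∀ ξ η : X → ℚ_[p], Mem ξ → Mem η → T (ξ + η) = T ξ + T η) →
    (∀ (c : ℤ_[p]) (ξ : X → ℚ_[p]), Mem ξ →
        T (fun x => (c : ℚ_[p]) * ξ x) = fun x => (c : ℚ_[p]) * T ξ x) →
    (∀ ξ η : X → ℚ_[p], Mem ξ → Mem η → Ts (ξ + η) = Ts ξ + Ts η) →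
    (∀ (c : ℤ_[p]) (ξ : X → ℚ_[p]), Mem ξ →
        Ts (fun x => (c : ℚ_[p]) * ξ x) = fun x => (c : ℚ_[p]) * Ts ξ x) →
    (∀ ξ η : X → ℚ_[p], Mem ξ → Mem η → pair (T ξ) η = pair ξ (Ts η)) →
    (∀ ξ : X → ℚ_[p], Mem ξ → Nrm ξ ≤ 1 → Nrm (T ξ) ≤ 1) →
    opNorm T = (⨆ x, ⨆ y, ‖T (δ y) x‖) ∧ opNorm Ts = opNorm T :=
  stmt16_general p X T Ts
end

section
/- The Tate algebra ℤ_p⟨T⟩ of power series ∑ₙ aₙTⁿ with aₙ ∈ ℤ_p and aₙ → 0, with the Gauss norm ‖∑aₙTⁿ‖ = maxₙ |aₙ|_p, admits an isometric representation on ℚ_p(ℤ): sending T to the operator τ = s + s⁻¹, where s is the bilateral shift s(ξ)(n) = ξ(n+1). Concretely: for every polynomial f = ∑_{k≤n} a_k T^k ∈ ℤ_p[T], the operator norm of f(τ) on ℚ_p(ℤ) equals max_k |a_k|_p. A key step: the matrix entry (τⁿ)_{n,0} = τⁿ(δ₀)(n) = 1 for every n ≥ 0. -/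
/-! The ultrametric inequality makes `τ = s + s⁻¹` a contraction of the unit ball, so
`‖f(τ)‖ ≤ maxₖ |aₖ|`. Conversely `τᵏ δ₀` vanishes beyond `k` and equals `1` at `k`, so the value
of `f(τ) δ₀` at `deg f` is the leading coefficient; subtracting that term does not increase the
sup-norm, and induction on the degree bounds every `|aₖ|` by `‖f(τ) δ₀‖`. -/

open Finset IsUltrametricDist

/-- `τ = s + s⁻¹`, with `s` the bilateral shift. -/
def shiftSum {R : Type*} [Add R] (ξ : ℤ → R) : ℤ → R := fun n => ξ (n + 1) + ξ (n - 1)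

section Support

variable {R : Type*} [AddZeroClass R] {ξ : ℤ → R}

lemma iterate_shiftSum_apply_eq_zero (hξ : ∀ m, 0 < m → ξ m = 0) :
    ∀ (j : ℕ) (m : ℤ), (j : ℤ) < m → shiftSum^[j] ξ m = 0
  | 0, m, hm => hξ m (by simpa using hm)
  | j + 1, m, hm => by
    rw [Function.iterate_succ_apply', shiftSum, iterate_shiftSum_apply_eq_zero hξ j _ (by omega),
      iterate_shiftSum_apply_eq_zero hξ j _ (by omega), add_zero]

lemma iterate_shiftSum_apply_self (hξ : ∀ m, 0 < m → ξ m = 0) :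
    ∀ j : ℕ, shiftSum^[j] ξ j = ξ 0
  | 0 => rfl
  | j + 1 => by
    rw [Function.iterate_succ_apply', shiftSum, iterate_shiftSum_apply_eq_zero hξ j _ (by omega),
      Nat.cast_succ, add_sub_cancel_right, iterate_shiftSum_apply_self hξ j, zero_add]

end Support

lemma norm_iterate_shiftSum_apply_le {E : Type*} [SeminormedAddGroup E] [IsUltrametricDist E]
    {ξ : ℤ → E} {C : ℝ} (hξ : ∀ m, ‖ξ m‖ ≤ C) : ∀ (j : ℕ) (m : ℤ), ‖shiftSum^[j] ξ m‖ ≤ C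
  | 0, m => hξ m
  | j + 1, m => by
    rw [Function.iterate_succ_apply']
    exact (norm_add_le_max _ _).trans
      (max_le (norm_iterate_shiftSum_apply_le hξ j _) (norm_iterate_shiftSum_apply_le hξ j _))

lemma bddAbove_range_of_finite_setOf_lt {ι α : Type*} [LinearOrder α] {f : ι → α} {c : α}
    (h : {i | c < f i}.Finite) : BddAbove (Set.range f) := by
  have : Nonempty α := ⟨c⟩
  refine ((h.image f).bddAbove.union (bddAbove_Iic (a := c))).mono ?_
  rintro _ ⟨i, rfl⟩
  by_cases hi : c < f i
  exacts [Or.inl ⟨i, hi, rfl⟩, Or.inr (not_lt.mp hi)]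

section PolyShiftSum

variable {K : Type*} [SeminormedRing K] [IsUltrametricDist K]

/-- `f(τ) ξ` for `f = ∑_{k < n} a_k Tᵏ` (note: `n` terms, degree below `n`). -/
def polyShiftSum (a : ℕ → K) (n : ℕ) (ξ : ℤ → K) : ℤ → K :=
  fun m => ∑ k ∈ range n, a k * shiftSum^[k] ξ m

lemma norm_mul_iterate_shiftSum_apply_le {ξ : ℤ → K} (hξ : ∀ m, ‖ξ m‖ ≤ 1) (c : K) (j : ℕ)
    (m : ℤ) : ‖c * shiftSum^[j] ξ m‖ ≤ ‖c‖ :=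
  calc ‖c * shiftSum^[j] ξ m‖ ≤ ‖c‖ * ‖shiftSum^[j] ξ m‖ := norm_mul_le _ _
    _ ≤ ‖c‖ * 1 := by gcongr; exact norm_iterate_shiftSum_apply_le hξ j m
    _ = ‖c‖ := mul_one _

lemma norm_polyShiftSum_apply_le {a : ℕ → K} {n : ℕ} {ξ : ℤ → K} {C : ℝ} (hC : 0 ≤ C)
    (ha : ∀ k < n, ‖a k‖ ≤ C) (hξ : ∀ m, ‖ξ m‖ ≤ 1) (m : ℤ) : ‖polyShiftSum a n ξ m‖ ≤ C :=
  norm_sum_le_of_forall_le_of_nonneg hC fun k hk =>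
    (norm_mul_iterate_shiftSum_apply_le hξ _ k m).trans (ha k (mem_range.mp hk))

lemma norm_coeff_le_of_norm_polyShiftSum_apply_le {a : ℕ → K} {δ : ℤ → K} {N : ℝ}
    (hδ₀ : δ 0 = 1) (hδpos : ∀ m, 0 < m → δ m = 0) (hδ : ∀ m, ‖δ m‖ ≤ 1) :
    ∀ n : ℕ, (∀ m, ‖polyShiftSum a n δ m‖ ≤ N) → ∀ k < n, ‖a k‖ ≤ N
  | 0, _, k, hk => absurd hk k.not_lt_zero
  | n + 1, hN, k, hk => by
    have htop : polyShiftSum a (n + 1) δ n = a n := by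
      rw [polyShiftSum, sum_range_succ, iterate_shiftSum_apply_self hδpos, hδ₀, mul_one,
        sum_eq_zero fun j hj => ?_, zero_add]
      rw [iterate_shiftSum_apply_eq_zero hδpos j n (by exact_mod_cast mem_range.mp hj), mul_zero]
    have han : ‖a n‖ ≤ N := htop ▸ hN n
    have hlower : ∀ m, ‖polyShiftSum a n δ m‖ ≤ N := fun m => by
      have hsplit : polyShiftSum a n δ m =
          polyShiftSum a (n + 1) δ m + -(a n * shiftSum^[n] δ m) := by
        simp only [polyShiftSum, sum_range_succ, add_neg_cancel_right]
      rw [hsplit]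
      exact (norm_add_le_max _ _).trans (max_le (hN m)
        ((norm_neg (a n * _)).trans_le ((norm_mul_iterate_shiftSum_apply_le hδ _ n m).trans han)))
    rcases Nat.lt_succ_iff_lt_or_eq.mp hk with hk | rfl
    exacts [norm_coeff_le_of_norm_polyShiftSum_apply_le hδ₀ hδpos hδ n hlower k hk, han]

end PolyShiftSum

lemma isGreatest_norm_polyShiftSum {K : Type*} [SeminormedRing K] [NormOneClass K]
    [IsUltrametricDist K] (a : ℕ → K) (n : ℕ) :
    IsGreatest {r : ℝ | ∃ ξ : ℤ → K, {m | 1 < ‖ξ m‖}.Finite ∧ (⨆ m, ‖ξ m‖) ≤ 1 ∧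
        r = ⨆ m, ‖polyShiftSum a (n + 1) ξ m‖} (⨆ k : Fin (n + 1), ‖a k‖) := by
  set M := ⨆ k : Fin (n + 1), ‖a k‖
  have hM : 0 ≤ M := Real.iSup_nonneg fun _ => norm_nonneg _
  have haM : ∀ k < n + 1, ‖a k‖ ≤ M := fun k hk =>
    le_ciSup (f := fun k : Fin (n + 1) => ‖a k‖) (Set.finite_range _).bddAbove ⟨k, hk⟩
  set δ : ℤ → K := Pi.single 0 1
  have hδ : ∀ m, ‖δ m‖ ≤ 1 := fun m => by by_cases hm : m = 0 <;> simp [δ, hm]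
  have hδM : ∀ m, ‖polyShiftSum a (n + 1) δ m‖ ≤ M := norm_polyShiftSum_apply_le hM haM hδ
  refine ⟨⟨δ, ?_, ciSup_le hδ, ?_⟩, ?_⟩
  · simp [not_lt.mpr (hδ _)]
  · refine le_antisymm (ciSup_le fun k => ?_) (ciSup_le hδM)
    exact norm_coeff_le_of_norm_polyShiftSum_apply_le (Pi.single_eq_same _ _)
      (fun m hm => Pi.single_eq_of_ne hm.ne' _) hδ (n + 1)
      (fun m => le_ciSup ⟨M, Set.forall_mem_range.2 hδM⟩ m) k k.isLt
  · rintro _ ⟨ξ, hfin, hξ, rfl⟩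
    have hξ1 : ∀ m, ‖ξ m‖ ≤ 1 := fun m =>
      (le_ciSup (bddAbove_range_of_finite_setOf_lt hfin) m).trans hξ
    exact ciSup_le (norm_polyShiftSum_apply_le hM haM hξ1)

/-- The Tate algebra `ℤ_p⟨T⟩` is isometrically represented on `ℚ_p(ℤ)` by sending `T` to
`τ = s + s⁻¹` (with `s` the bilateral shift): every polynomial `f = ∑_{k ≤ n} a_k T^k`
satisfies `‖f(τ)‖ = max_k |a_k|_p` for the operator norm on the unit ball of `ℚ_p(ℤ)`.
Key step: the matrix entry `(τⁿ)_{n,0} = τⁿ(δ₀)(n) = 1` for every `n ≥ 0`. -/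
theorem stmt17 (p : ℕ) [Fact p.Prime] :
    let τ : (ℤ → ℚ_[p]) → ℤ → ℚ_[p] := fun ξ n => ξ (n + 1) + ξ (n - 1)
    let δ₀ : ℤ → ℚ_[p] := fun n => if n = 0 then 1 else 0
    let Mem : (ℤ → ℚ_[p]) → Prop := fun ξ => {n : ℤ | 1 < ‖ξ n‖}.Finite
    let Nrm : (ℤ → ℚ_[p]) → ℝ := fun ξ => ⨆ n, ‖ξ n‖
    (∀ n : ℕ, (τ^[n] δ₀) (n : ℤ) = 1) ∧
    (∀ (n : ℕ) (a : ℕ → ℤ_[p]),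
      sSup {r : ℝ | ∃ ξ : ℤ → ℚ_[p], Mem ξ ∧ Nrm ξ ≤ 1 ∧
          r = Nrm (fun m => ∑ k ∈ Finset.range (n + 1), (a k : ℚ_[p]) * τ^[k] ξ m)}
        = ⨆ k : Fin (n + 1), ‖a k‖) := by
  intro τ δ₀ Mem Nrm
  refine ⟨fun n => (iterate_shiftSum_apply_self (fun m hm => if_neg hm.ne') n).trans (if_pos rfl),
    fun n a => ?_⟩
  simp_rw [PadicInt.norm_def]
  exact (isGreatest_norm_polyShiftSum (fun k => (a k : ℚ_[p])) n).csSup_eq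
end
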